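/- arXiv:2012.10938 — 3 statements merged into one kernel-verified Lean document; each statement's English description precedes it below -/
import Mathlib

section
/- Let D be a closed disk of radius R centered at O, and P a point on its boundary circle. For an even integer n ≥ 4, draw n lines through P meeting at equal angles π/n, and let Ã₁, …, Ãₙ be the second intersections of the lines with the circle, numbered clockwise from P. For 1 ≤ k ≤ n/2 − 1, the sum of the area of the circular region bounded by segments PÃₖ, PÃₖ₊₁ and the arc ÃₖÃₖ₊₁, and the area of the region bounded by segments PÃₖ₊ₙ⁄₂, PÃₖ₊ₙ⁄₂₊₁ and the arc Ãₖ₊ₙ⁄₂Ãₖ₊ₙ⁄₂₊₁, equals (2/n)·πR², i.e. 2/n times the area of D. -/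
open Real MeasureTheory

/-- The closed angular sector at `P` of directions with angles in `[a, b]`. -/
def angularSector (P : ℂ) (a b : ℝ) : Set ℂ :=
  {z : ℂ | ∃ t : ℝ, 0 ≤ t ∧ ∃ φ : ℝ, a ≤ φ ∧ φ ≤ b ∧
    z = P + (t : ℂ) * Complex.exp ((φ : ℝ) * Complex.I)}

private lemma sq_abs_sub_exp (t φ s ψ : ℝ) :
    ‖(t : ℂ) * Complex.exp ((φ : ℝ) * Complex.I)
        - (s : ℂ) * Complex.exp ((ψ : ℝ) * Complex.I)‖ ^ 2
      = t ^ 2 + s ^ 2 - 2 * t * s * Real.cos (φ - ψ) := by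
  rw [← Complex.normSq_eq_norm_sq, Complex.normSq_apply]
  simp only [Complex.sub_re, Complex.sub_im, Complex.mul_re, Complex.mul_im,
    Complex.ofReal_re, Complex.ofReal_im, Complex.exp_ofReal_mul_I_re,
    Complex.exp_ofReal_mul_I_im, zero_mul, sub_zero, zero_add]
  rw [Real.cos_sub]
  linear_combination (t ^ 2) * Real.sin_sq_add_cos_sq φ + (s ^ 2) * Real.sin_sq_add_cos_sq ψ

private lemma cos_nonneg_between {x δ : ℝ} (hδ0 : 0 ≤ δ) (hδ : δ ≤ π / 2)
    (h1 : 0 < Real.cos x) (h2 : 0 < Real.cos (x + δ)) {y : ℝ}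
    (hy1 : x ≤ y) (hy2 : y ≤ x + δ) : 0 ≤ Real.cos y := by
  have hπ := Real.pi_pos
  set m : ℤ := round (x / (2 * π)) with hm
  have hb : |x / (2 * π) - m| ≤ 1 / 2 := abs_sub_round _
  have hx' : |x - m * (2 * π)| ≤ π := by
    have hxeq : x - m * (2 * π) = (x / (2 * π) - m) * (2 * π) := by field_simp
    rw [hxeq, abs_mul, abs_of_pos (by linarith : (0:ℝ) < 2 * π)]
    nlinarith
  have hco : Real.cos (x - m * (2 * π)) = Real.cos x := Real.cos_sub_int_mul_two_pi x m
  have habs := abs_le.1 hx'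
  have hxlo : -(π / 2) < x - m * (2 * π) := by
    by_contra h
    push_neg at h
    have hc : Real.cos (x - m * (2 * π)) ≤ 0 := by
      rw [← Real.cos_neg]
      exact Real.cos_nonpos_of_pi_div_two_le_of_le (by linarith) (by linarith [habs.1])
    rw [hco] at hc; linarith
  have hcoy : Real.cos (y - m * (2 * π)) = Real.cos y := Real.cos_sub_int_mul_two_pi y m
  rcases le_or_gt (y - m * (2 * π)) (π / 2) with hle | hgt
  · rw [← hcoy]
    exact Real.cos_nonneg_of_mem_Icc ⟨by linarith, hle⟩
  · exfalso
    have hxd : Real.cos (x - m * (2 * π) + δ) ≤ 0 :=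
      Real.cos_nonpos_of_pi_div_two_le_of_le (by linarith) (by linarith [habs.2])
    have heq : Real.cos (x - m * (2 * π) + δ) = Real.cos (x + δ) := by
      have h3 : x - m * (2 * π) + δ = (x + δ) - m * (2 * π) := by ring
      rw [h3, Real.cos_sub_int_mul_two_pi]
    rw [heq] at hxd; linarith

private def sliceT (R ψ β : ℝ) : Set (ℝ × ℝ) :=
  {p : ℝ × ℝ | (0 < p.1 ∧ p.1 ≤ 2 * R * Real.cos (p.2 - ψ)) ∧ 0 ≤ p.2 ∧ p.2 ≤ β}

private lemma measurableSet_sliceT (R ψ β : ℝ) : MeasurableSet (sliceT R ψ β) := by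
  have h1 : MeasurableSet {p : ℝ × ℝ | 0 < p.1} := measurableSet_lt measurable_const measurable_fst
  have h2 : MeasurableSet {p : ℝ × ℝ | p.1 ≤ 2 * R * Real.cos (p.2 - ψ)} :=
    measurableSet_le measurable_fst
      ((continuous_const.mul ((Real.continuous_cos.comp
        (continuous_id.sub continuous_const)).comp continuous_snd))).measurable
  have h3 : MeasurableSet {p : ℝ × ℝ | 0 ≤ p.2} := measurableSet_le measurable_const measurable_snd
  have h4 : MeasurableSet {p : ℝ × ℝ | p.2 ≤ β} := measurableSet_le measurable_snd measurable_const
  have : sliceT R ψ β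
      = ({p : ℝ × ℝ | 0 < p.1} ∩ {p : ℝ × ℝ | p.1 ≤ 2 * R * Real.cos (p.2 - ψ)})
        ∩ ({p : ℝ × ℝ | 0 ≤ p.2} ∩ {p : ℝ × ℝ | p.2 ≤ β}) := by
    ext p; simp [sliceT, Set.mem_inter_iff, and_assoc]
  rw [this]
  exact (h1.inter h2).inter (h3.inter h4)

private lemma sliceT_subset_target {R ψ β : ℝ} (hβ : β < π) :
    sliceT R ψ β ⊆ polarCoord.target := by
  rintro ⟨r, φ⟩ ⟨⟨hr, _⟩, hφ0, hφβ⟩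
  refine ⟨hr, ?_, lt_of_le_of_lt hφβ hβ⟩
  have := Real.pi_pos
  simp only
  linarith

private lemma model_eq (R : ℝ) (hR : 0 ≤ R) (ψ β : ℝ) (hβ0 : 0 ≤ β) :
    Metric.closedBall ((R : ℂ) * Complex.exp ((ψ : ℝ) * Complex.I)) R ∩ angularSector 0 0 β
      = Complex.polarCoord.symm '' sliceT R ψ β ∪ {0} := by
  have hsymm : ∀ t φ : ℝ, Complex.polarCoord.symm (t, φ)
      = (t : ℂ) * Complex.exp ((φ : ℝ) * Complex.I) := by
    intro t φ
    rw [Complex.polarCoord_symm_apply, Complex.exp_mul_I, Complex.ofReal_cos, Complex.ofReal_sin]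
  ext z
  constructor
  · rintro ⟨hball, t, ht, φ, hφ0, hφβ, rfl⟩
    rw [zero_add] at *
    rcases eq_or_lt_of_le ht with h0 | h0
    · right; simp [← h0]
    · left
      refine ⟨(t, φ), ⟨⟨h0, ?_⟩, hφ0, hφβ⟩, by rw [hsymm]⟩
      rw [Metric.mem_closedBall, Complex.dist_eq] at hball
      have h2 : ‖(t : ℂ) * Complex.exp ((φ : ℝ) * Complex.I)
          - (R : ℂ) * Complex.exp ((ψ : ℝ) * Complex.I)‖ ^ 2 ≤ R ^ 2 :=
        pow_le_pow_left₀ (norm_nonneg _) hball 2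
      rw [sq_abs_sub_exp] at h2
      nlinarith
  · rintro (⟨⟨t, φ⟩, ⟨⟨ht0, htle⟩, hφ0, hφβ⟩, rfl⟩ | hz)
    · rw [hsymm]
      constructor
      · rw [Metric.mem_closedBall, Complex.dist_eq]
        have h2 : ‖(t : ℂ) * Complex.exp ((φ : ℝ) * Complex.I)
            - (R : ℂ) * Complex.exp ((ψ : ℝ) * Complex.I)‖ ^ 2
            = t ^ 2 + R ^ 2 - 2 * t * R * Real.cos (φ - ψ) := sq_abs_sub_exp t φ R ψ
        have h3 : ‖(t : ℂ) * Complex.exp ((φ : ℝ) * Complex.I)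
            - (R : ℂ) * Complex.exp ((ψ : ℝ) * Complex.I)‖ ^ 2 ≤ R ^ 2 := by nlinarith
        nlinarith [norm_nonneg ((t : ℂ) * Complex.exp ((φ : ℝ) * Complex.I)
            - (R : ℂ) * Complex.exp ((ψ : ℝ) * Complex.I))]
      · exact ⟨t, ht0.le, φ, hφ0, hφβ, by rw [zero_add]⟩
    · simp only [Set.mem_singleton_iff] at hz
      subst hz
      constructor
      · rw [Metric.mem_closedBall, Complex.dist_eq, zero_sub, norm_neg, norm_mul,
          Complex.norm_exp_ofReal_mul_I, mul_one, Complex.norm_real, Real.norm_eq_abs, abs_of_nonneg hR]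
      · exact ⟨0, le_refl 0, 0, le_refl 0, hβ0, by simp⟩

private lemma measurable_model (R : ℝ) (hR : 0 ≤ R) (ψ β : ℝ) (hβ0 : 0 ≤ β) (hβ : β < π) :
    MeasurableSet (Metric.closedBall ((R : ℂ) * Complex.exp ((ψ : ℝ) * Complex.I)) R
      ∩ angularSector 0 0 β) := by
  rw [model_eq R hR ψ β hβ0]
  apply MeasurableSet.union _ (measurableSet_singleton 0)
  have hsub : sliceT R ψ β ⊆ Complex.polarCoord.target := by
    rw [Complex.polarCoord_target]
    exact sliceT_subset_target hβ
  rw [Complex.polarCoord.symm_image_eq_source_inter_preimage hsub]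
  apply MeasurableSet.inter
  · exact Complex.isOpen_slitPlane.measurableSet
  · have hm : Measurable (Complex.polarCoord : ℂ → ℝ × ℝ) := by
      have heq : (Complex.polarCoord : ℂ → ℝ × ℝ)
          = fun z => (‖z‖, Complex.arg z) := funext Complex.polarCoord_apply
      rw [heq]
      exact continuous_norm.measurable.prodMk Complex.measurable_arg
    exact hm (measurableSet_sliceT R ψ β)

private lemma lintegral_Ioc_ofReal (c : ℝ) (hc : 0 ≤ c) :
    ∫⁻ x in Set.Ioc (0 : ℝ) c, ENNReal.ofReal x = ENNReal.ofReal (c ^ 2 / 2) := by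
  rw [← ofReal_integral_eq_lintegral_ofReal]
  · congr 1
    rw [← intervalIntegral.integral_of_le hc, integral_id]
    ring
  · exact (continuous_id.integrableOn_Icc).mono_set Set.Ioc_subset_Icc_self
  · exact (ae_restrict_iff' measurableSet_Ioc).2 (ae_of_all _ fun x hx => hx.1.le)

private lemma volume_model (R : ℝ) (hR : 0 < R) (ψ β : ℝ) (hβ0 : 0 ≤ β) (hβ : β < π)
    (hcos : ∀ x ∈ Set.Icc (0:ℝ) β, 0 ≤ Real.cos (x - ψ)) :
    volume (Metric.closedBall ((R : ℂ) * Complex.exp ((ψ : ℝ) * Complex.I)) R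
        ∩ angularSector 0 0 β)
      = ∫⁻ x in Set.Icc (0:ℝ) β, ENNReal.ofReal (2 * R ^ 2 * Real.cos (x - ψ) ^ 2) := by
  rw [model_eq R hR.le ψ β hβ0]
  have hnull : volume (Complex.polarCoord.symm '' sliceT R ψ β ∪ {0})
      = volume (Complex.polarCoord.symm '' sliceT R ψ β) := by
    apply le_antisymm
    · calc volume (Complex.polarCoord.symm '' sliceT R ψ β ∪ {0})
          ≤ volume (Complex.polarCoord.symm '' sliceT R ψ β) + volume ({0} : Set ℂ) :=
            measure_union_le _ _
        _ = volume (Complex.polarCoord.symm '' sliceT R ψ β) := by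
            rw [measure_singleton, add_zero]
    · exact measure_mono Set.subset_union_left
  rw [hnull]
  have hT := measurableSet_sliceT R ψ β
  have hTt : sliceT R ψ β ⊆ polarCoord.target := sliceT_subset_target hβ
  -- transfer to ℝ × ℝ
  have hkey : ∀ p : ℝ × ℝ, Complex.polarCoord.symm p
      = Complex.measurableEquivRealProd.symm (polarCoord.symm p) := fun p => rfl
  have himg : Complex.polarCoord.symm '' sliceT R ψ β
      = Complex.measurableEquivRealProd ⁻¹' (polarCoord.symm '' sliceT R ψ β) := by
    ext z
    simp only [Set.mem_image, Set.mem_preimage]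
    constructor
    · rintro ⟨p, hp, rfl⟩
      exact ⟨p, hp, by rw [hkey]; simp⟩
    · rintro ⟨p, hp, hpe⟩
      refine ⟨p, hp, ?_⟩
      rw [hkey, hpe]
      simp
  rw [himg, Complex.volume_preserving_equiv_real_prod.measure_preimage_emb
    Complex.measurableEquivRealProd.measurableEmbedding]
  -- change of variables on ℝ × ℝ
  set B : ℝ × ℝ → ℝ × ℝ →L[ℝ] ℝ × ℝ := fun p =>
    LinearMap.toContinuousLinearMap (Matrix.toLin (Module.Basis.finTwoProd ℝ) (Module.Basis.finTwoProd ℝ)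
      !![Real.cos p.2, -p.1 * Real.sin p.2; Real.sin p.2, p.1 * Real.cos p.2]) with hB
  have hder : ∀ p ∈ sliceT R ψ β, HasFDerivWithinAt polarCoord.symm (B p) (sliceT R ψ β) p :=
    fun p _ => (hasFDerivAt_polarCoord_symm p).hasFDerivWithinAt
  have B_det : ∀ p : ℝ × ℝ, (B p).det = p.1 := by
    intro p
    conv_rhs => rw [← one_mul p.1, ← Real.cos_sq_add_sin_sq p.2]
    simp only [hB, neg_mul, LinearMap.det_toContinuousLinearMap, LinearMap.det_toLin,
      Matrix.det_fin_two_of, sub_neg_eq_add]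
    ring
  have hinj : Set.InjOn polarCoord.symm (sliceT R ψ β) := by
    apply polarCoord.symm.injOn.mono
    rwa [polarCoord.symm_source]
  have hchg := lintegral_image_eq_lintegral_abs_det_fderiv_mul volume hT hder hinj
    (fun _ => (1 : ENNReal))
  rw [setLIntegral_one] at hchg
  rw [hchg]
  have hcongr : ∫⁻ p in sliceT R ψ β, ENNReal.ofReal |(B p).det| * (1 : ENNReal)
      = ∫⁻ p in sliceT R ψ β, ENNReal.ofReal p.1 := by
    apply setLIntegral_congr_fun hT
    exact fun p hp => by rw [B_det, abs_of_pos hp.1.1, mul_one]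
  rw [hcongr, ← lintegral_indicator hT, Measure.volume_eq_prod, lintegral_prod_symm]
  swap
  · exact ((measurable_fst.ennreal_ofReal).indicator hT).aemeasurable
  have hin : ∀ y : ℝ, (∫⁻ x, (sliceT R ψ β).indicator (fun p => ENNReal.ofReal p.1) (x, y))
      = Set.indicator (Set.Icc (0:ℝ) β)
          (fun y => ENNReal.ofReal (2 * R ^ 2 * Real.cos (y - ψ) ^ 2)) y := by
    intro y
    by_cases hy : y ∈ Set.Icc (0:ℝ) β
    · have hfy : 0 ≤ 2 * R * Real.cos (y - ψ) :=
        mul_nonneg (by linarith) (hcos y hy)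
      have hptw : ∀ x : ℝ, (sliceT R ψ β).indicator (fun p => ENNReal.ofReal p.1) (x, y)
          = (Set.Ioc (0:ℝ) (2 * R * Real.cos (y - ψ))).indicator ENNReal.ofReal x := by
        intro x
        by_cases hx : x ∈ Set.Ioc (0:ℝ) (2 * R * Real.cos (y - ψ))
        · rw [Set.indicator_of_mem hx, Set.indicator_of_mem]
          exact ⟨⟨hx.1, hx.2⟩, hy.1, hy.2⟩
        · rw [Set.indicator_of_notMem hx, Set.indicator_of_notMem]
          intro hmem
          exact hx ⟨hmem.1.1, hmem.1.2⟩
      rw [lintegral_congr hptw, lintegral_indicator measurableSet_Ioc,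
        lintegral_Ioc_ofReal _ hfy, Set.indicator_of_mem hy]
      congr 1
      ring
    · rw [Set.indicator_of_notMem hy]
      have hptw : ∀ x : ℝ, (sliceT R ψ β).indicator (fun p => ENNReal.ofReal p.1) (x, y) = 0 :=
        fun x => Set.indicator_of_notMem (fun hmem => hy ⟨hmem.2.1, hmem.2.2⟩) _
      rw [lintegral_congr hptw, lintegral_zero]
  rw [lintegral_congr hin, lintegral_indicator measurableSet_Icc]

private lemma volume_slice (O P : ℂ) (R : ℝ) (hR : 0 < R) (hOP : ‖O - P‖ = R)
    (a β : ℝ) (hβ0 : 0 ≤ β) (hβ : β < π)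
    (hcos : ∀ x ∈ Set.Icc (0:ℝ) β, 0 ≤ Real.cos (x - (Complex.arg (O - P) - a))) :
    volume (Metric.closedBall O R ∩ angularSector P a (a + β))
      = ∫⁻ x in Set.Icc (0:ℝ) β,
          ENNReal.ofReal (2 * R ^ 2 * Real.cos (x - (Complex.arg (O - P) - a)) ^ 2) := by
  set ψ : ℝ := Complex.arg (O - P) - a with hψ
  have hOPexp : O - P = (R : ℂ) * Complex.exp ((Complex.arg (O - P) : ℝ) * Complex.I) := by
    conv_lhs => rw [← Complex.norm_mul_exp_arg_mul_I (O - P)]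
    rw [hOP]
  set u : Circle := Circle.exp (-a) with hu
  set Φ : ℂ → ℂ := fun z => rotation u (z - P) with hΦ
  have hΦz : ∀ z, Φ z = Complex.exp (((-a : ℝ) : ℂ) * Complex.I) * (z - P) := by
    intro z
    rw [hΦ]
    simp only [rotation_apply, hu, Circle.coe_exp]
  have hMP : MeasurePreserving Φ volume volume := by
    have h1 : MeasurePreserving (fun z : ℂ => z - P) volume volume :=
      measurePreserving_sub_right volume P
    exact ((rotation u).measurePreserving).comp h1
  have harg : ∀ x y : ℝ, ((x : ℂ)) * Complex.I + ((y : ℂ)) * Complex.I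
      = (((x + y : ℝ)) : ℂ) * Complex.I := by
    intro x y
    push_cast
    ring
  have hC : (R : ℂ) * Complex.exp ((ψ : ℝ) * Complex.I) = Φ O := by
    rw [hΦz O, hOPexp, mul_left_comm, ← Complex.exp_add, harg]
    have hψ2 : -a + Complex.arg (O - P) = ψ := by rw [hψ]; ring
    rw [hψ2]
  have hset : Metric.closedBall O R ∩ angularSector P a (a + β)
      = Φ ⁻¹' (Metric.closedBall ((R : ℂ) * Complex.exp ((ψ : ℝ) * Complex.I)) R
          ∩ angularSector 0 0 β) := by
    ext z
    simp only [Set.mem_preimage, Set.mem_inter_iff, Metric.mem_closedBall]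
    have hdist : dist (Φ z) (Φ O) = dist z O := by
      rw [hΦz, hΦz, Complex.dist_eq, Complex.dist_eq, ← mul_sub, norm_mul,
        Complex.norm_exp_ofReal_mul_I, one_mul, sub_sub_sub_cancel_right]
    apply and_congr
    · rw [hC, hdist]
    · constructor
      · rintro ⟨t, ht, φ, hφ1, hφ2, rfl⟩
        refine ⟨t, ht, φ - a, by linarith, by linarith, ?_⟩
        rw [hΦz, add_sub_cancel_left, zero_add, mul_left_comm, ← Complex.exp_add, harg]
        rw [show -a + φ = φ - a from by ring]
      · rintro ⟨t, ht, φ, hφ1, hφ2, hz⟩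
        refine ⟨t, ht, φ + a, by linarith, by linarith, ?_⟩
        rw [hΦz, zero_add] at hz
        have h2 : z - P = Complex.exp (((a : ℝ) : ℂ) * Complex.I)
            * ((t : ℂ) * Complex.exp (((φ : ℝ) : ℂ) * Complex.I)) := by
          rw [← hz, ← mul_assoc, ← Complex.exp_add, harg]
          norm_num
        have h3 : z = P + (z - P) := by ring
        rw [h3, h2, mul_left_comm, ← Complex.exp_add, harg, add_comm φ a]
  rw [hset, hMP.measure_preimage (measurable_model R hR.le ψ β hβ0 hβ).nullMeasurableSet,
    volume_model R hR ψ β hβ0 hβ hcos]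

/-- `P` on the boundary of the disk `D` of radius `R` about `O`; the `n`
equiangular lines through `P` (directions `θ + k·π/n`) meet the circle again at
`Ã k = P + ρ k · e^{i(θ + kπ/n)}` with `ρ k > 0`, for `1 ≤ k ≤ n`.  The slice `Sl(Ãₖ)_P`
is `D` intersected with the sector at `P` between the directions of the `k`-th and
`(k+1)`-st lines.  For `1 ≤ k ≤ n/2 − 1`, the areas of the `k`-th and `(k+n/2)`-th
slices sum to `(2/n)·πR²`. -/
theorem baumkuchen_stmt1
    (O P : ℂ) (R : ℝ) (hR : 0 < R) (hP : dist O P = R)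
    (n : ℕ) (hn : 4 ≤ n) (hev : Even n) (θ : ℝ) (ρ : ℕ → ℝ)
    (hρ : ∀ k : ℕ, 1 ≤ k → k ≤ n → 0 < ρ k ∧
      dist O (P + (ρ k : ℂ) * Complex.exp ((↑(θ + (k : ℝ) * π / n)) * Complex.I)) = R) :
    ∀ k : ℕ, 1 ≤ k → k ≤ n / 2 - 1 →
      volume (Metric.closedBall O R ∩
          angularSector P (θ + (k : ℝ) * π / n) (θ + ((k : ℝ) + 1) * π / n)) +
      volume (Metric.closedBall O R ∩
          angularSector P (θ + ((k + n / 2 : ℕ) : ℝ) * π / n)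
            (θ + (((k + n / 2 : ℕ) : ℝ) + 1) * π / n)) =
      ENNReal.ofReal (2 / n * (π * R ^ 2)) := by
  intro k hk1 hk2
  have hπ := Real.pi_pos
  have hn2 : n / 2 * 2 = n := Nat.div_two_mul_two_of_even hev
  have hnR : (4 : ℝ) ≤ n := by exact_mod_cast hn
  have hn0 : (0 : ℝ) < n := by linarith
  have hβ0 : (0 : ℝ) ≤ π / n := by positivity
  have hβ2 : π / n ≤ π / 2 := by
    rw [div_le_div_iff₀ hn0 (by norm_num : (0:ℝ) < 2)]
    nlinarith
  have hβπ : π / n < π := by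
    apply div_lt_self hπ (by linarith)
  set ψ₀ : ℝ := Complex.arg (O - P) with hψ₀
  have hOP : ‖O - P‖ = R := by rw [← hP, Complex.dist_eq]
  have hOPexp : O - P = (R : ℂ) * Complex.exp ((ψ₀ : ℝ) * Complex.I) := by
    conv_lhs => rw [← Complex.norm_mul_exp_arg_mul_I (O - P)]
    rw [hOP, hψ₀]
  -- positivity of cosine at each line direction
  have hcosline : ∀ j : ℕ, 1 ≤ j → j ≤ n → 0 < Real.cos ((θ + (j : ℝ) * π / n) - ψ₀) := by
    intro j h1 h2
    obtain ⟨hρ0, hρd⟩ := hρ j h1 h2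
    have hd : ‖(R : ℂ) * Complex.exp ((ψ₀ : ℝ) * Complex.I)
        - (ρ j : ℂ) * Complex.exp ((↑(θ + (j : ℝ) * π / n)) * Complex.I)‖ = R := by
      rw [← hOPexp]
      have h3 : O - P - (ρ j : ℂ) * Complex.exp ((↑(θ + (j : ℝ) * π / n)) * Complex.I)
          = O - (P + (ρ j : ℂ) * Complex.exp ((↑(θ + (j : ℝ) * π / n)) * Complex.I)) := by
        ring
      rw [h3, ← Complex.dist_eq, hρd]
    have hsq : ‖(R : ℂ) * Complex.exp ((ψ₀ : ℝ) * Complex.I)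
        - (ρ j : ℂ) * Complex.exp ((↑(θ + (j : ℝ) * π / n)) * Complex.I)‖ ^ 2 = R ^ 2 := by
      rw [hd]
    rw [sq_abs_sub_exp R ψ₀ (ρ j) (θ + (j : ℝ) * π / n)] at hsq
    have hcc : Real.cos (ψ₀ - (θ + (j : ℝ) * π / n))
        = Real.cos ((θ + (j : ℝ) * π / n) - ψ₀) := by
      rw [← Real.cos_neg]; congr 1; ring
    rw [hcc] at hsq
    nlinarith [pow_pos hρ0 2, mul_pos hR hρ0]
  -- the common slice computation
  have key : ∀ j : ℕ, 1 ≤ j → j + 1 ≤ n →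
      volume (Metric.closedBall O R
          ∩ angularSector P (θ + (j : ℝ) * π / n) (θ + (j : ℝ) * π / n + π / n))
        = ∫⁻ x in Set.Icc (0:ℝ) (π / n),
            ENNReal.ofReal (2 * R ^ 2 * Real.cos (x - (ψ₀ - (θ + (j : ℝ) * π / n))) ^ 2) := by
    intro j h1 h2
    apply volume_slice O P R hR hOP _ _ hβ0 hβπ
    intro x hx
    have e1 := hcosline j h1 (by omega)
    have e2 := hcosline (j + 1) (by omega) h2
    have e2' : 0 < Real.cos ((θ + (j : ℝ) * π / n - ψ₀) + π / n) := by
      have hform : (θ + (j : ℝ) * π / n - ψ₀) + π / n = θ + ((j : ℕ) + 1 : ℝ) * π / n - ψ₀ := by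
        ring
      rw [hform]
      exact_mod_cast e2
    have hmem1 : θ + (j : ℝ) * π / n - ψ₀ ≤ x - (ψ₀ - (θ + (j : ℝ) * π / n)) := by
      have := hx.1; linarith
    have hmem2 : x - (ψ₀ - (θ + (j : ℝ) * π / n)) ≤ (θ + (j : ℝ) * π / n - ψ₀) + π / n := by
      have := hx.2; linarith
    exact cos_nonneg_between hβ0 hβ2 e1 e2' hmem1 hmem2
  -- indices
  have hkn : k + 1 ≤ n := by omega
  have hkn2 : (k + n / 2) + 1 ≤ n := by omega
  have hk21 : 1 ≤ k + n / 2 := by omega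
  -- rewrite the two slices
  have hup1 : θ + ((k : ℝ) + 1) * π / n = θ + (k : ℝ) * π / n + π / n := by ring
  have hup2 : θ + (((k + n / 2 : ℕ) : ℝ) + 1) * π / n
      = θ + ((k + n / 2 : ℕ) : ℝ) * π / n + π / n := by ring
  rw [hup1, hup2, key k hk1 hkn, key (k + n / 2) hk21 hkn2]
  -- half-turn relation between the two slice angles
  have hhalf : ((n / 2 : ℕ) : ℝ) * π / n = π / 2 := by
    have h2 : ((n / 2 : ℕ) : ℝ) * 2 = n := by exact_mod_cast hn2
    rw [div_eq_iff (ne_of_gt hn0)]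
    linear_combination (π / 2) * h2
  have hshift : ψ₀ - (θ + ((k + n / 2 : ℕ) : ℝ) * π / n)
      = (ψ₀ - (θ + (k : ℝ) * π / n)) - π / 2 := by
    push_cast
    linear_combination -hhalf
  -- combine
  have hmeas : Measurable fun x : ℝ =>
      ENNReal.ofReal (2 * R ^ 2 * Real.cos (x - (ψ₀ - (θ + (k : ℝ) * π / n))) ^ 2) := by
    apply Measurable.ennreal_ofReal
    exact (continuous_const.mul
      ((Real.continuous_cos.comp (continuous_id.sub continuous_const)).pow 2)).measurable
  rw [← lintegral_add_left hmeas]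
  have hpt : ∀ x : ℝ,
      ENNReal.ofReal (2 * R ^ 2 * Real.cos (x - (ψ₀ - (θ + (k : ℝ) * π / n))) ^ 2)
        + ENNReal.ofReal (2 * R ^ 2
            * Real.cos (x - (ψ₀ - (θ + ((k + n / 2 : ℕ) : ℝ) * π / n))) ^ 2)
      = ENNReal.ofReal (2 * R ^ 2) := by
    intro x
    rw [← ENNReal.ofReal_add (by positivity) (by positivity)]
    congr 1
    set v : ℝ := x - (ψ₀ - (θ + (k : ℝ) * π / n)) with hv
    have hform : x - (ψ₀ - (θ + ((k + n / 2 : ℕ) : ℝ) * π / n)) = v + π / 2 := by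
      rw [hv, hshift]; ring
    rw [hform, Real.cos_add_pi_div_two]
    have hsc := Real.sin_sq_add_cos_sq v
    linear_combination (2 * R ^ 2) * hsc
  rw [lintegral_congr hpt, setLIntegral_const, Real.volume_Icc, sub_zero,
    ← ENNReal.ofReal_mul (by positivity)]
  congr 1
  ring
end

section
/- Let D be a closed disk of radius R centered at O, P a point on its boundary, and n ≥ 4 even. With Ã₁, …, Ãₙ the second intersections of the n equiangular lines through P with the circle (clockwise from P), the sum of the area of the slice bounded by PÃ_{n/2}, PÃ_{n/2+1} and the arc Ã_{n/2}Ã_{n/2+1}, together with the area of the region bounded by segments PÃ₁, PÃₙ and the arc Ã₁PÃₙ containing P, equals (2/n)·πR². -/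
open Real MeasureTheory

/-!
Seen from `P`, with `ψ` the direction of `O`, the disk is `{P + r e^{iφ} : r ≤ 2R cos (φ - ψ)}`,
so a sector of directions inside `[ψ - π/2, ψ + π/2]` has area `2R² ∫ cos² (φ - ψ) dφ`. Because the
chords `PÃ₁` and `PÃₙ` exist, the tangent direction `ψ + π/2` lies strictly between the directions
`θ + π` and `θ + π + π/n` of the lines `n` and `1` (mod `2π`), so the region at `P` consists of the
two wedges of the disk next to the tangent, of total opening `π/n`. A quarter turn carries them
(directions taken mod `π`) onto the directions of the central slice and turns `cos²` into `sin²`; since `cos² + sin² = 1`, the two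
areas add up to `2R² · π/n`.
-/

open Set

lemma measurableSet_angularSector (P : ℂ) (a b : ℝ) : MeasurableSet (angularSector P a b) := by
  have h : angularSector P a b = ⋃ N : ℕ,
      (fun q : ℝ × ℝ ↦ P + (q.1 : ℂ) * Complex.exp (q.2 * Complex.I)) ''
        (Icc 0 (N : ℝ) ×ˢ Icc a b) := by
    ext z
    simp only [angularSector, mem_ofPred_eq, mem_iUnion, mem_image, mem_prod, mem_Icc, Prod.exists]
    constructor
    · rintro ⟨t, ht, φ, hφa, hφb, rfl⟩
      exact ⟨⌈t⌉₊, t, φ, ⟨⟨ht, Nat.le_ceil t⟩, hφa, hφb⟩, rfl⟩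
    · rintro ⟨N, t, φ, ⟨⟨ht, -⟩, hφa, hφb⟩, rfl⟩
      exact ⟨t, ht, φ, hφa, hφb, rfl⟩
  rw [h]
  exact .iUnion fun N ↦ ((isCompact_Icc.prod isCompact_Icc).image (by fun_prop)).measurableSet

lemma angularSector_add_two_pi (P : ℂ) (a b : ℝ) :
    angularSector P (a + 2 * π) (b + 2 * π) = angularSector P a b := by
  have hexp (φ : ℝ) : Complex.exp (((φ + 2 * π : ℝ) : ℂ) * Complex.I) =
      Complex.exp (φ * Complex.I) := by
    rw [Complex.ofReal_add, add_mul, Complex.exp_add]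
    push_cast
    rw [Complex.exp_two_pi_mul_I, mul_one]
  ext z
  constructor
  · rintro ⟨t, ht, φ, hφa, hφb, rfl⟩
    refine ⟨t, ht, φ - 2 * π, by linarith, by linarith, ?_⟩
    rw [← hexp (φ - 2 * π), sub_add_cancel]
  · rintro ⟨t, ht, φ, hφa, hφb, rfl⟩
    exact ⟨t, ht, φ + 2 * π, by linarith, by linarith, by rw [hexp]⟩

lemma angularSector_union {a b c : ℝ} (P : ℂ) (hab : a ≤ b) (hbc : b ≤ c) :
    angularSector P a b ∪ angularSector P b c = angularSector P a c := by
  ext z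
  constructor
  · rintro (⟨t, ht, φ, hφa, hφb, rfl⟩ | ⟨t, ht, φ, hφa, hφb, rfl⟩) <;>
      exact ⟨t, ht, φ, by linarith, by linarith, rfl⟩
  · rintro ⟨t, ht, φ, hφa, hφc, rfl⟩
    rcases le_total φ b with h | h
    · exact .inl ⟨t, ht, φ, hφa, h, rfl⟩
    · exact .inr ⟨t, ht, φ, h, hφc, rfl⟩

lemma eq_of_mul_exp_eq {t t' φ φ' : ℝ} (ht : 0 < t) (ht' : 0 ≤ t')
    (h : (t : ℂ) * Complex.exp (φ * Complex.I) = t' * Complex.exp (φ' * Complex.I)) :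
    t = t' ∧ ∃ k : ℤ, φ = φ' + k * (2 * π) := by
  have htt : t = t' := by
    simpa [Complex.norm_exp_ofReal_mul_I, abs_of_pos ht, abs_of_nonneg ht'] using
      congrArg (‖·‖) h
  subst htt
  obtain ⟨k, hk⟩ := Complex.exp_eq_exp_iff_exists_int.mp
    (mul_left_cancel₀ (Complex.ofReal_ne_zero.mpr ht.ne') h)
  exact ⟨rfl, k, by simpa using congrArg Complex.im hk⟩

lemma angularSector_inter_subset {a₁ b₁ a₂ b₂ : ℝ} (P : ℂ) (h₁₂ : b₁ < a₂)
    (h₂₁ : b₂ < a₁ + 2 * π) : angularSector P a₁ b₁ ∩ angularSector P a₂ b₂ ⊆ {P} := by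
  rintro z ⟨⟨t, ht, φ, hφa, hφb, rfl⟩, ⟨t', ht', φ', hφa', hφb', heq⟩⟩
  rcases ht.eq_or_lt with rfl | ht
  · simp
  obtain ⟨-, k, hk⟩ := eq_of_mul_exp_eq ht ht' (add_left_cancel heq)
  have hk₀ : (k : ℝ) < 0 := by nlinarith [pi_pos]
  have hk₁ : (-1 : ℝ) < k := by nlinarith [pi_pos]
  norm_cast at hk₀ hk₁
  omega

noncomputable def recenter (P : ℂ) (ψ : ℝ) (z : ℂ) : ℂ :=
  Complex.exp (-ψ * Complex.I) * (z - P)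

lemma recenter_add_mul_exp (P : ℂ) (ψ t φ : ℝ) :
    recenter P ψ (P + t * Complex.exp (φ * Complex.I)) =
      t * Complex.exp ((φ - ψ : ℝ) * Complex.I) := by
  rw [recenter, add_sub_cancel_left, mul_left_comm, ← Complex.exp_add]
  push_cast
  ring_nf

lemma recenter_eq_rotation (P : ℂ) (ψ : ℝ) :
    recenter P ψ = rotation (Circle.exp (-ψ)) ∘ (· - P) := by
  funext z
  simp only [recenter, Function.comp, rotation_apply, Circle.coe_exp]
  push_cast
  rfl

lemma isometry_recenter (P : ℂ) (ψ : ℝ) : Isometry (recenter P ψ) := by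
  rw [recenter_eq_rotation]
  exact (rotation _).isometry.comp (IsometryEquiv.subRight P).isometry

lemma measurePreserving_recenter (P : ℂ) (ψ : ℝ) : MeasurePreserving (recenter P ψ) := by
  rw [recenter_eq_rotation]
  exact (rotation _).measurePreserving.comp (measurePreserving_sub_right volume P)

lemma recenter_preimage_angularSector (P : ℂ) (ψ a b : ℝ) :
    recenter P ψ ⁻¹' angularSector 0 (a - ψ) (b - ψ) = angularSector P a b := by
  ext z
  constructor
  · rintro ⟨t, ht, φ, hφa, hφb, hz⟩
    refine ⟨t, ht, φ + ψ, by linarith, by linarith, (isometry_recenter P ψ).injective ?_⟩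
    rw [hz, recenter_add_mul_exp, zero_add, add_sub_cancel_right]
  · rintro ⟨t, ht, φ, hφa, hφb, rfl⟩
    exact ⟨t, ht, φ - ψ, by linarith, by linarith, by rw [recenter_add_mul_exp, zero_add]⟩

lemma volume_closedBall_inter_angularSector_eq (O P : ℂ) (R ψ a b : ℝ) :
    volume (Metric.closedBall O R ∩ angularSector P a b) =
      volume (Metric.closedBall (recenter P ψ O) R ∩ angularSector 0 (a - ψ) (b - ψ)) := by
  rw [← recenter_preimage_angularSector P ψ, ← (isometry_recenter P ψ).preimage_closedBall,
    ← preimage_inter, (measurePreserving_recenter P ψ).measure_preimage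
    (measurableSet_closedBall.inter (measurableSet_angularSector _ _ _)).nullMeasurableSet]

lemma recenter_arg (P z : ℂ) : recenter P (Complex.arg (z - P)) z = ‖z - P‖ := by
  rw [recenter]
  generalize z - P = w
  nth_rw 2 [← Complex.norm_mul_exp_arg_mul_I w]
  rw [mul_left_comm, ← Complex.exp_add, neg_mul, neg_add_cancel, Complex.exp_zero,
    mul_one]

lemma recenter_add_int_mul_two_pi (P : ℂ) (ψ : ℝ) (m : ℤ) :
    recenter P (ψ + m * (2 * π)) = recenter P ψ := by
  funext z
  rw [recenter, recenter, Complex.ofReal_add, neg_add, add_mul, Complex.exp_add]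
  have hm : Complex.exp (-((m * (2 * π) : ℝ) : ℂ) * Complex.I) = 1 := by
    rw [← Complex.exp_int_mul_two_pi_mul_I (-m)]
    push_cast
    ring_nf
  rw [hm, mul_one]

lemma lintegral_Ioc_ofReal_id {c : ℝ} (hc : 0 ≤ c) :
    ∫⁻ r in Ioc 0 c, ENNReal.ofReal r = ENNReal.ofReal (c ^ 2 / 2) := by
  have hint : IntegrableOn (fun r : ℝ ↦ r) (Ioc 0 c) :=
    continuous_id'.integrableOn_Icc.mono_set Ioc_subset_Icc_self
  rw [← ofReal_integral_eq_lintegral_ofReal hint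
      ((ae_restrict_iff' measurableSet_Ioc).2 (.of_forall fun r hr ↦ hr.1.le)),
    ← intervalIntegral.integral_of_le hc, integral_id]
  ring_nf

def polarRegion (a b : ℝ) (f : ℝ → ℝ) : Set (ℝ × ℝ) :=
  {p | p.2 ∈ Icc a b ∧ p.1 ∈ Ioc 0 (f p.2)}

lemma measurableSet_polarRegion (a b : ℝ) {f : ℝ → ℝ} (hf : Measurable f) :
    MeasurableSet (polarRegion a b f) :=
  (measurableSet_Icc.preimage measurable_snd).inter ((measurableSet_lt measurable_const
    measurable_fst).inter (measurableSet_le measurable_fst (hf.comp measurable_snd)))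

lemma lintegral_polarRegion {a b : ℝ} {f : ℝ → ℝ} (hf : Continuous f) (hab : a ≤ b)
    (hf₀ : ∀ φ ∈ Icc a b, 0 ≤ f φ) :
    ∫⁻ p in polarRegion a b f, ENNReal.ofReal p.1 = ENNReal.ofReal (∫ φ in a..b, f φ ^ 2 / 2) := by
  have hT := measurableSet_polarRegion a b hf.measurable
  calc ∫⁻ p in polarRegion a b f, ENNReal.ofReal p.1
      = ∫⁻ φ in Icc a b, ENNReal.ofReal (f φ ^ 2 / 2) := by
        rw [← lintegral_indicator hT, Measure.volume_eq_prod, lintegral_prod_symm _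
          ((measurable_fst.ennreal_ofReal).indicator hT).aemeasurable,
          ← lintegral_indicator measurableSet_Icc]
        congr 1 with φ
        by_cases hφ : φ ∈ Icc a b
        · rw [indicator_of_mem hφ, ← lintegral_Ioc_ofReal_id (hf₀ φ hφ),
            ← lintegral_indicator measurableSet_Ioc]
          simp [polarRegion, indicator_apply, hφ.1, hφ.2]
        · have hφT : ∀ r, (r, φ) ∉ polarRegion a b f := fun r h ↦ hφ h.1
          simp [indicator_of_notMem hφ, indicator_of_notMem (hφT _)]
    _ = ENNReal.ofReal (∫ φ in a..b, f φ ^ 2 / 2) := by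
        rw [intervalIntegral.integral_of_le hab, ← integral_Icc_eq_integral_Ioc,
          ofReal_integral_eq_lintegral_ofReal (by fun_prop : Continuous _).integrableOn_Icc
            ((ae_restrict_iff' measurableSet_Icc).2 (.of_forall fun φ _ ↦ by positivity))]

lemma volume_eq_ofReal_integral_of_polar {S : Set ℂ} (hS : MeasurableSet S) {f : ℝ → ℝ}
    (hf : Continuous f) {a b : ℝ} (ha : -π < a) (hab : a ≤ b) (hb : b < π)
    (hf₀ : ∀ φ ∈ Icc a b, 0 ≤ f φ)
    (hmem : ∀ r : ℝ, 0 < r → ∀ φ ∈ Ioo (-π) π,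
      (r : ℂ) * Complex.exp (φ * Complex.I) ∈ S ↔ φ ∈ Icc a b ∧ r ≤ f φ) :
    volume S = ENNReal.ofReal (∫ φ in a..b, f φ ^ 2 / 2) := by
  set T := polarRegion a b f
  have hT_target : T ⊆ polarCoord.target := fun p ⟨hφ, hr, _⟩ ↦
    ⟨hr, by linarith [hφ.1], by linarith [hφ.2]⟩
  have hST : ∀ p ∈ polarCoord.target,
      ENNReal.ofReal p.1 • S.indicator 1 (Complex.polarCoord.symm p) =
        T.indicator (fun p ↦ ENNReal.ofReal p.1) p := by
    rintro ⟨r, φ⟩ ⟨hr, hφ⟩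
    have hsymm : Complex.polarCoord.symm (r, φ) = r * Complex.exp (φ * Complex.I) := by
      rw [Complex.polarCoord_symm_apply, Complex.exp_mul_I]
      push_cast
      ring
    have hiff : Complex.polarCoord.symm (r, φ) ∈ S ↔ (r, φ) ∈ T := by
      rw [hsymm, hmem r hr φ hφ]
      exact ⟨fun ⟨hφ', hle⟩ ↦ ⟨hφ', hr, hle⟩, fun ⟨hφ', _, hle⟩ ↦ ⟨hφ', hle⟩⟩
    by_cases hp : (r, φ) ∈ T
    · rw [indicator_of_mem (hiff.2 hp), indicator_of_mem hp, Pi.one_apply, smul_eq_mul, mul_one]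
    · rw [indicator_of_notMem (mt hiff.1 hp), indicator_of_notMem hp, smul_zero]
  rw [← lintegral_indicator_one hS, ← Complex.lintegral_comp_polarCoord_symm,
    setLIntegral_congr_fun polarCoord.open_target.measurableSet hST,
    lintegral_indicator (measurableSet_polarRegion a b hf.measurable),
    Measure.restrict_restrict (measurableSet_polarRegion a b hf.measurable),
    inter_eq_left.2 hT_target, lintegral_polarRegion hf hab hf₀]

lemma mul_exp_mem_closedBall_iff {R r φ : ℝ} (hR : 0 ≤ R) (hr : 0 < r) :
    (r : ℂ) * Complex.exp (φ * Complex.I) ∈ Metric.closedBall (R : ℂ) R ↔ r ≤ 2 * R * cos φ := by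
  have hsq : ‖(r : ℂ) * Complex.exp (φ * Complex.I) - R‖ ^ 2 = R ^ 2 + r * (r - 2 * R * cos φ) := by
    rw [Complex.sq_norm, Complex.normSq_apply]
    simp only [Complex.sub_re, Complex.sub_im, Complex.mul_re, Complex.mul_im,
      Complex.exp_ofReal_mul_I_re, Complex.exp_ofReal_mul_I_im, Complex.ofReal_re,
      Complex.ofReal_im]
    linear_combination r ^ 2 * sin_sq_add_cos_sq φ
  rw [Metric.mem_closedBall, Complex.dist_eq, ← sq_le_sq₀ (norm_nonneg _) hR, hsq]
  constructor <;> intro h <;> nlinarith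

lemma mul_exp_mem_angularSector_zero_iff {a b r φ : ℝ} (hr : 0 < r) (ha : -π < a) (hb : b ≤ π)
    (hφ : φ ∈ Ioc (-π) π) :
    (r : ℂ) * Complex.exp (φ * Complex.I) ∈ angularSector 0 a b ↔ φ ∈ Icc a b := by
  constructor
  · rintro ⟨t, ht, φ', hφa, hφb, h⟩
    rw [zero_add] at h
    obtain ⟨-, k, hk⟩ := eq_of_mul_exp_eq hr ht h
    have hk₀ : (k : ℝ) < 1 := by nlinarith [pi_pos, hφ.1, hφ.2]
    have hk₁ : (-1 : ℝ) < k := by nlinarith [pi_pos, hφ.1, hφ.2]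
    norm_cast at hk₀ hk₁
    obtain rfl : k = 0 := by omega
    simp only [Int.cast_zero, zero_mul, add_zero] at hk
    exact hk ▸ ⟨hφa, hφb⟩
  · rintro ⟨hφa, hφb⟩
    exact ⟨r, hr.le, φ, hφa, hφb, (zero_add _).symm⟩

lemma volume_closedBall_inter_angularSector_zero {R a b : ℝ} (hR : 0 ≤ R)
    (ha : -(π / 2) ≤ a) (hab : a ≤ b) (hb : b ≤ π / 2) :
    volume (Metric.closedBall (R : ℂ) R ∩ angularSector 0 a b) =
      ENNReal.ofReal (2 * R ^ 2 * ∫ φ in a..b, cos φ ^ 2) := by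
  have hπ := pi_pos
  rw [volume_eq_ofReal_integral_of_polar (f := fun φ ↦ 2 * R * cos φ)
    (measurableSet_closedBall.inter (measurableSet_angularSector _ _ _)) (by fun_prop)
    (by linarith) hab (by linarith)
    (fun φ hφ ↦ by have := cos_nonneg_of_mem_Icc ⟨ha.trans hφ.1, hφ.2.trans hb⟩; positivity)
    (fun r hr φ hφ ↦ by
      rw [mem_inter_iff, mul_exp_mem_closedBall_iff hR hr,
        mul_exp_mem_angularSector_zero_iff hr (by linarith) (by linarith) ⟨hφ.1, hφ.2.le⟩,
        and_comm])]
  rw [← intervalIntegral.integral_const_mul]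
  congr 2 with φ
  ring

lemma closedBall_inter_angularSector_zero_subset {R : ℝ} (hR : 0 ≤ R) :
    Metric.closedBall (R : ℂ) R ∩ angularSector 0 (π / 2) (3 * π / 2) ⊆ {0} := by
  rintro _ ⟨hball, t, ht, φ, hφa, hφb, rfl⟩
  rcases ht.eq_or_lt with rfl | ht
  · simp
  rw [zero_add, mul_exp_mem_closedBall_iff hR ht] at hball
  nlinarith [cos_nonpos_of_pi_div_two_le_of_le hφa (by linarith)]

lemma volume_closedBall_inter_angularSector_zero_split {R a b : ℝ} (hR : 0 ≤ R)
    (ha : a ≤ π / 2) (hb : 3 * π / 2 ≤ b) (hab : b < a + 2 * π) :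
    volume (Metric.closedBall (R : ℂ) R ∩ angularSector 0 a b) =
      volume (Metric.closedBall (R : ℂ) R ∩ angularSector 0 a (π / 2)) +
        volume (Metric.closedBall (R : ℂ) R ∩ angularSector 0 (-(π / 2)) (b - 2 * π)) := by
  set B := Metric.closedBall (R : ℂ) R
  have hπ := pi_pos
  have hshift : angularSector 0 (3 * π / 2) b = angularSector 0 (-(π / 2)) (b - 2 * π) := by
    rw [← angularSector_add_two_pi 0 (-(π / 2)) (b - 2 * π)]
    congr 1 <;> ring
  have hnull : volume (B ∩ angularSector 0 (π / 2) (3 * π / 2)) = 0 :=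
    measure_mono_null (closedBall_inter_angularSector_zero_subset hR) (measure_singleton 0)
  have hdisj :
      AEDisjoint volume (B ∩ angularSector 0 a (π / 2)) (B ∩ angularSector 0 (3 * π / 2) b) :=
    measure_mono_null (fun z ⟨⟨_, hz₁⟩, ⟨_, hz₂⟩⟩ ↦ angularSector_inter_subset 0 (by linarith)
      (by linarith) ⟨hz₁, hz₂⟩) (measure_singleton 0)
  rw [← hshift, ← angularSector_union 0 (by linarith : a ≤ 3 * π / 2) hb,
    ← angularSector_union 0 ha (by linarith : π / 2 ≤ 3 * π / 2), inter_union_distrib_left,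
    inter_union_distrib_left, measure_union₀
      (measurableSet_closedBall.inter (measurableSet_angularSector _ _ _)).nullMeasurableSet
      (hdisj.union_left (AEDisjoint.of_null_left hnull)),
    measure_congr (union_ae_eq_left_of_ae_eq_empty (ae_eq_empty.2 hnull))]

lemma cos_pos_of_dist_eq {O P : ℂ} {R ψ ρ α : ℝ} (hO : recenter P ψ O = R) (hρ : 0 < ρ)
    (hd : dist O (P + ρ * Complex.exp (α * Complex.I)) = R) : 0 < cos (α - ψ) := by
  have hR : 0 ≤ R := hd ▸ dist_nonneg
  have hmem : (ρ : ℂ) * Complex.exp ((α - ψ : ℝ) * Complex.I) ∈ Metric.closedBall (R : ℂ) R := by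
    rw [Metric.mem_closedBall, dist_comm, ← hO, ← recenter_add_mul_exp,
      (isometry_recenter P ψ).dist_eq, hd]
  have := (mul_exp_mem_closedBall_iff hR hρ).1 hmem
  by_contra hcos
  nlinarith [not_lt.1 hcos]

lemma exists_int_sub_mem_Ioo_of_cos_pos {x δ : ℝ} (hδ : 0 ≤ δ) (h₁ : 0 < cos (x + δ))
    (h₂ : 0 < cos (x + π)) : ∃ m : ℤ, x - m * (2 * π) ∈ Ioo (-(π / 2) - δ) (-(π / 2)) := by
  have hπ := pi_pos
  set y := toIcoMod two_pi_pos (-(3 * π / 2)) x with hy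
  have hy_mem : y ∈ Ico (-(3 * π / 2)) (-(3 * π / 2) + 2 * π) := toIcoMod_mem_Ico _ _ _
  have hyx : y = x - toIcoDiv two_pi_pos (-(3 * π / 2)) x * (2 * π) := by
    rw [hy, toIcoMod, zsmul_eq_mul]
  refine ⟨toIcoDiv two_pi_pos (-(3 * π / 2)) x, ?_, ?_⟩ <;> rw [← hyx]
  · rw [← cos_sub_int_mul_two_pi, add_sub_right_comm, ← hyx] at h₁
    by_contra h
    have := cos_nonpos_of_pi_div_two_le_of_le (x := -(y + δ)) (by linarith [not_lt.1 h])
      (by linarith [hy_mem.1])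
    rw [cos_neg] at this
    linarith
  · rw [← cos_sub_int_mul_two_pi, add_sub_right_comm, ← hyx] at h₂
    by_contra h
    have := cos_nonpos_of_pi_div_two_le_of_le (x := y + π) (by linarith [not_lt.1 h])
      (by linarith [hy_mem.2])
    linarith

lemma exists_direction_of_chords {O P : ℂ} {R θ δ ρ₁ ρ₂ : ℝ} (hP : dist O P = R) (hδ : 0 ≤ δ)
    (hρ₁ : 0 < ρ₁) (h₁ : dist O (P + ρ₁ * Complex.exp ((θ + δ : ℝ) * Complex.I)) = R)
    (hρ₂ : 0 < ρ₂) (h₂ : dist O (P + ρ₂ * Complex.exp ((θ + π : ℝ) * Complex.I)) = R) :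
    ∃ ψ : ℝ, recenter P ψ O = R ∧ θ - ψ ∈ Ioo (-(π / 2) - δ) (-(π / 2)) := by
  have hO : recenter P (Complex.arg (O - P)) O = R := by
    rw [recenter_arg, ← dist_eq_norm, hP]
  have c₁ := cos_pos_of_dist_eq hO hρ₁ h₁
  have c₂ := cos_pos_of_dist_eq hO hρ₂ h₂
  rw [add_sub_right_comm] at c₁ c₂
  obtain ⟨m, hm⟩ := exists_int_sub_mem_Ioo_of_cos_pos hδ c₁ c₂
  exact ⟨Complex.arg (O - P) + m * (2 * π), by rw [recenter_add_int_mul_two_pi, hO],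
    by rwa [← sub_sub]⟩

lemma integral_cos_sq_slice_add_wedges (τ δ : ℝ) :
    (∫ x in τ + π / 2..τ + π / 2 + δ, cos x ^ 2) +
      ((∫ x in τ + π..π / 2, cos x ^ 2) + ∫ x in -(π / 2)..τ + δ, cos x ^ 2) = δ := by
  simp only [integral_cos_sq, add_right_comm _ (π / 2) δ, sin_add_pi_div_two, cos_add_pi_div_two,
    sin_add_pi, cos_add_pi, sin_pi_div_two, cos_pi_div_two, sin_neg, cos_neg]
  ring

lemma volume_slice_add_volume_wedges {R τ δ : ℝ} (hR : 0 ≤ R) (hδ : δ ≤ π / 2)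
    (hτ : τ ∈ Ioo (-(π / 2) - δ) (-(π / 2))) :
    volume (Metric.closedBall (R : ℂ) R ∩ angularSector 0 (τ + π / 2) (τ + π / 2 + δ)) +
      volume (Metric.closedBall (R : ℂ) R ∩ angularSector 0 (τ + π) (τ + δ + 2 * π)) =
      ENNReal.ofReal (2 * R ^ 2 * δ) := by
  obtain ⟨hτ₁, hτ₂⟩ := hτ
  have hπ := pi_pos
  have hnn {a b : ℝ} (hab : a ≤ b) : 0 ≤ 2 * R ^ 2 * ∫ φ in a..b, cos φ ^ 2 :=
    mul_nonneg (by positivity) (intervalIntegral.integral_nonneg hab fun _ _ ↦ sq_nonneg _)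
  rw [volume_closedBall_inter_angularSector_zero_split (a := τ + π) hR (by linarith) (by linarith)
      (by linarith), add_sub_cancel_right,
    volume_closedBall_inter_angularSector_zero hR (by linarith) (by linarith) (by linarith),
    volume_closedBall_inter_angularSector_zero hR (by linarith) (by linarith) le_rfl,
    volume_closedBall_inter_angularSector_zero hR le_rfl (by linarith) (by linarith),
    ← ENNReal.ofReal_add (hnn (by linarith)) (hnn (by linarith)),
    ← ENNReal.ofReal_add (hnn (by linarith)) (add_nonneg (hnn (by linarith)) (hnn (by linarith))),
    ← mul_add, ← mul_add, integral_cos_sq_slice_add_wedges]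

theorem baumkuchen_stmt2_general
    (O P : ℂ) (R : ℝ) (hP : dist O P = R)
    (n : ℕ) (hn : 4 ≤ n) (hev : Even n) (θ : ℝ) (ρ : ℕ → ℝ)
    (hρ : ∀ k : ℕ, 1 ≤ k → k ≤ n → 0 < ρ k ∧
      dist O (P + (ρ k : ℂ) * Complex.exp ((↑(θ + (k : ℝ) * π / n)) * Complex.I)) = R) :
    volume (Metric.closedBall O R ∩
        angularSector P (θ + ((n / 2 : ℕ) : ℝ) * π / n) (θ + (((n / 2 : ℕ) : ℝ) + 1) * π / n)) +
    volume (Metric.closedBall O R ∩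
        angularSector P (θ + π) (θ + 2 * π + π / n)) =
    ENNReal.ofReal (2 / n * (π * R ^ 2)) := by
  have hR : 0 ≤ R := hP ▸ dist_nonneg
  have hn₀ : (0 : ℝ) < n := by exact_mod_cast (by omega : 0 < n)
  have hπn : π / n ≤ π / 2 := by gcongr; exact_mod_cast (by omega : 2 ≤ n)
  obtain ⟨hρ₁, h₁⟩ := hρ 1 le_rfl (by omega)
  obtain ⟨hρₙ, hₙ⟩ := hρ n (by omega) le_rfl
  rw [Nat.cast_one, one_mul] at h₁
  rw [mul_div_cancel_left₀ π hn₀.ne'] at hₙ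
  obtain ⟨ψ, hO, hτ⟩ := exists_direction_of_chords hP (by positivity) hρ₁ h₁ hρₙ hₙ
  have hhalf : ((n / 2 : ℕ) : ℝ) * π / n = π / 2 := by
    rw [Nat.cast_div_charZero hev.two_dvd, Nat.cast_ofNat]
    field_simp
  rw [volume_closedBall_inter_angularSector_eq O P R ψ,
    volume_closedBall_inter_angularSector_eq O P R ψ, hO,
    show θ + ((n / 2 : ℕ) : ℝ) * π / n - ψ = θ - ψ + π / 2 by rw [hhalf]; ring,
    show θ + (((n / 2 : ℕ) : ℝ) + 1) * π / n - ψ = θ - ψ + π / 2 + π / n by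
      rw [add_mul, add_div, hhalf]; ring,
    show θ + π - ψ = θ - ψ + π by ring,
    show θ + 2 * π + π / n - ψ = θ - ψ + π / n + 2 * π by ring,
    volume_slice_add_volume_wedges hR hπn hτ]
  congr 1
  ring

/-- with `P` on the boundary of the disk of radius `R` about `O` and the `n`
equiangular lines through `P` at directions `θ + k·π/n` (second intersections
`Ã k = P + ρ k · e^{i(θ+kπ/n)}`, `ρ k > 0`, `1 ≤ k ≤ n`), the area of the slice bounded by
`PÃ_{n/2}`, `PÃ_{n/2+1}` and the arc (the sector between lines `n/2` and `n/2+1`) plus the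
area of the region bounded by `PÃ₁`, `PÃₙ` and the arc `Ã₁PÃₙ` containing `P` (the sector
from direction `θ + π` around to `θ + 2π + π/n`) equals `(2/n)·πR²`. -/
theorem baumkuchen_stmt2
    (O P : ℂ) (R : ℝ) (hR : 0 < R) (hP : dist O P = R)
    (n : ℕ) (hn : 4 ≤ n) (hev : Even n) (θ : ℝ) (ρ : ℕ → ℝ)
    (hρ : ∀ k : ℕ, 1 ≤ k → k ≤ n → 0 < ρ k ∧
      dist O (P + (ρ k : ℂ) * Complex.exp ((↑(θ + (k : ℝ) * π / n)) * Complex.I)) = R) :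
    volume (Metric.closedBall O R ∩
        angularSector P (θ + ((n / 2 : ℕ) : ℝ) * π / n) (θ + (((n / 2 : ℕ) : ℝ) + 1) * π / n)) +
    volume (Metric.closedBall O R ∩
        angularSector P (θ + π) (θ + 2 * π + π / n)) =
    ENNReal.ofReal (2 / n * (π * R ^ 2)) :=
  baumkuchen_stmt2_general O P R hP n hn hev θ ρ hρ
end

section
/- Pizza Theorem (two-person form): Let D be a closed disk, P any interior point of D, and n a positive multiple of 4. Draw n lines through P at equal angles π/n, dividing D into 2n slices numbered consecutively clockwise 1, 2, …, 2n. Then the total area of the odd-numbered slices equals the total area of the even-numbered slices; each equals half the area of D. -/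
/-!
In polar coordinates about `P`, the part of the disk between the directions `a` and `a + δ` has
area `∫_a^{a+δ} ρ(φ)² / 2 dφ`, where `ρ(φ)` is the distance from `P` to the circle in direction
`φ`. If `(x, y)` are the coordinates of `P - O` in the frame turned by `φ`, then
`ρ(φ) = √(R² - y²) - x` and `ρ(φ + π) = √(R² - y²) + x`, so
`ρ(φ)² + ρ(φ + π)² = 2R² - 2‖P - O‖² + 4x²`. Adding the same identity at `φ + π/2`, where `x`
becomes `y`, gives `∑_{j<4} ρ(φ + jπ/2)² = 4R²`. Since `4 ∣ n`, the odd slices fall into `n/4`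
groups of four related by quarter turns about `P`, and each group has area `2R² · π/n`.
-/

open Real MeasureTheory

open Complex Set Metric

/-- The distance from `O + w` to the circle of radius `R` about `O` in direction `φ`;
`(x, y) = (w.re cos φ + w.im sin φ, w.im cos φ - w.re sin φ)` are the coordinates of `w` in the
frame turned by `φ`, and the ray leaves the disk at `t = √(R² - y²) - x`. -/
noncomputable def rayLength (w : ℂ) (R φ : ℝ) : ℝ :=
  √(R ^ 2 - (w.im * Real.cos φ - w.re * Real.sin φ) ^ 2) - (w.re * Real.cos φ + w.im * Real.sin φ)

lemma add_sq_add_sq_le_iff {x y R t : ℝ} (hxy : x ^ 2 + y ^ 2 ≤ R ^ 2) (ht : 0 ≤ t) :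
    (t + x) ^ 2 + y ^ 2 ≤ R ^ 2 ↔ t ≤ √(R ^ 2 - y ^ 2) - x := by
  have hx := (Real.sq_le (by linarith [sq_nonneg x])).1 (le_sub_iff_add_le.2 hxy)
  rw [← le_sub_iff_add_le, Real.sq_le (by linarith [sq_nonneg x])]
  constructor
  · intro h; linarith
  · intro h; constructor <;> linarith

lemma norm_add_mul_exp_sq (w : ℂ) (t φ : ℝ) :
    ‖w + t * exp (φ * I)‖ ^ 2 = (t + (w.re * Real.cos φ + w.im * Real.sin φ)) ^ 2
      + (w.im * Real.cos φ - w.re * Real.sin φ) ^ 2 := by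
  rw [Complex.sq_norm, Complex.normSq_apply]
  simp only [add_re, add_im, re_ofReal_mul, im_ofReal_mul, exp_ofReal_mul_I_re,
    exp_ofReal_mul_I_im]
  linear_combination (t ^ 2 - w.re ^ 2 - w.im ^ 2) * Real.sin_sq_add_cos_sq φ

lemma norm_sq_eq_frame (w : ℂ) (φ : ℝ) :
    ‖w‖ ^ 2 = (w.re * Real.cos φ + w.im * Real.sin φ) ^ 2
      + (w.im * Real.cos φ - w.re * Real.sin φ) ^ 2 := by
  simpa using norm_add_mul_exp_sq w 0 φ

lemma norm_add_mul_exp_le_iff {w : ℂ} {R : ℝ} (hw : ‖w‖ ≤ R) {t : ℝ} (ht : 0 ≤ t) (φ : ℝ) :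
    ‖w + t * exp (φ * I)‖ ≤ R ↔ t ≤ rayLength w R φ := by
  have hR : 0 ≤ R := (norm_nonneg w).trans hw
  rw [← sq_le_sq₀ (norm_nonneg _) hR, norm_add_mul_exp_sq]
  exact add_sq_add_sq_le_iff (norm_sq_eq_frame w φ ▸ pow_le_pow_left₀ (norm_nonneg w) hw 2) ht

@[fun_prop]
lemma continuous_rayLength (w : ℂ) (R : ℝ) : Continuous (rayLength w R) := by
  unfold rayLength
  fun_prop

lemma rayLength_nonneg {w : ℂ} {R : ℝ} (hw : ‖w‖ ≤ R) (φ : ℝ) : 0 ≤ rayLength w R φ :=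
  (norm_add_mul_exp_le_iff hw le_rfl φ).1 (by simpa using hw)

lemma rayLength_sq_add_rayLength_add_pi_sq {w : ℂ} {R : ℝ} (hw : ‖w‖ ≤ R) (φ : ℝ) :
    rayLength w R φ ^ 2 + rayLength w R (φ + π) ^ 2 =
      2 * R ^ 2 - 2 * ‖w‖ ^ 2 + 4 * (w.re * Real.cos φ + w.im * Real.sin φ) ^ 2 := by
  have hw2 := norm_sq_eq_frame w φ
  have hy := Real.sq_sqrt (show 0 ≤ R ^ 2 - (w.im * Real.cos φ - w.re * Real.sin φ) ^ 2 by
    nlinarith [pow_le_pow_left₀ (norm_nonneg w) hw 2])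
  simp only [rayLength, Real.cos_add_pi, Real.sin_add_pi]
  rw [show (w.im * -Real.cos φ - w.re * -Real.sin φ) ^ 2
    = (w.im * Real.cos φ - w.re * Real.sin φ) ^ 2 by ring]
  linear_combination 2 * hy + 2 * hw2

lemma sum_rayLength_sq_quarter_turns {w : ℂ} {R : ℝ} (hw : ‖w‖ ≤ R) (φ : ℝ) :
    ∑ j ∈ Finset.range 4, rayLength w R (φ + j * (π / 2)) ^ 2 = 4 * R ^ 2 := by
  have h₁ := rayLength_sq_add_rayLength_add_pi_sq hw φ
  have h₂ := rayLength_sq_add_rayLength_add_pi_sq hw (φ + π / 2)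
  rw [Real.cos_add_pi_div_two, Real.sin_add_pi_div_two] at h₂
  simp only [Finset.sum_range_succ, Finset.sum_range_zero, Nat.cast_zero, Nat.cast_one,
    Nat.cast_ofNat, zero_mul, one_mul, zero_add, add_zero]
  rw [show φ + 2 * (π / 2) = φ + π by ring, show φ + 3 * (π / 2) = φ + π / 2 + π by ring]
  linear_combination h₁ + h₂ - 4 * norm_sq_eq_frame w φ

lemma setLIntegral_Ioc_zero_ofReal {a : ℝ} (ha : 0 ≤ a) :
    ∫⁻ r in Ioc 0 a, ENNReal.ofReal r = ENNReal.ofReal (a ^ 2 / 2) := by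
  rw [← ofReal_integral_eq_lintegral_ofReal, ← intervalIntegral.integral_of_le ha, integral_id]
  · ring_nf
  · exact continuous_id.integrableOn_Ioc
  · exact (ae_restrict_iff' measurableSet_Ioc).2 (.of_forall fun r hr => hr.1.le)

lemma volume_setOf_arg_mem_norm_le {s : Set ℝ} (hs : MeasurableSet s) (hsπ : s ⊆ Ioo (-π) π)
    {f : ℝ → ℝ} (hf : Measurable f) (hf0 : ∀ φ, 0 ≤ f φ) :
    volume {z : ℂ | arg z ∈ s ∧ ‖z‖ ≤ f (arg z)} = ∫⁻ φ in s, ENNReal.ofReal (f φ ^ 2 / 2) := by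
  set S := {z : ℂ | arg z ∈ s ∧ ‖z‖ ≤ f (arg z)}
  set T := {p : ℝ × ℝ | p.2 ∈ s ∧ p.1 ∈ Ioc 0 (f p.2)}
  have hS : MeasurableSet S :=
    (measurable_arg hs).inter (measurableSet_le measurable_norm (hf.comp measurable_arg))
  have hT : MeasurableSet T :=
    (measurable_snd hs).inter ((measurableSet_lt measurable_const measurable_fst).inter
      (measurableSet_le measurable_fst (hf.comp measurable_snd)))
  have hTtarget : T ⊆ Complex.polarCoord.target := fun p hp => ⟨hp.2.1, hsπ hp.1⟩
  have hpolar : ∀ p ∈ Complex.polarCoord.target,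
      ENNReal.ofReal p.1 • S.indicator 1 (Complex.polarCoord.symm p) =
        T.indicator (fun p => ENNReal.ofReal p.1) p := by
    rintro ⟨r, φ⟩ ⟨hr, hφ⟩
    simp only [mem_Ioi, mem_Ioo] at hr hφ
    have hz : Complex.polarCoord.symm (r, φ) = r * exp (φ * I) := by
      simp [exp_mul_I]
    have harg : arg (r * exp (φ * I)) = φ := by
      rw [arg_real_mul _ hr, exp_mul_I, arg_cos_add_sin_mul_I ⟨hφ.1, hφ.2.le⟩]
    have hnorm : ‖(r : ℂ) * exp (φ * I)‖ = r := by
      rw [norm_mul, norm_exp_ofReal_mul_I, mul_one, norm_real, Real.norm_of_nonneg hr.le]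
    have hmem : (r : ℂ) * exp (φ * I) ∈ S ↔ φ ∈ s ∧ r ≤ f φ := by
      simp only [S, mem_ofPred_eq, harg, hnorm]
    by_cases h : φ ∈ s ∧ r ≤ f φ
    · rw [hz, indicator_of_mem (hmem.2 h), indicator_of_mem (show (r, φ) ∈ T from ⟨h.1, hr, h.2⟩)]
      simp
    · rw [hz, indicator_of_notMem (mt hmem.1 h), indicator_of_notMem (fun hT => h ⟨hT.1, hT.2.2⟩)]
      simp
  calc volume S = ∫⁻ z, S.indicator 1 z := (lintegral_indicator_one hS).symm
    _ = ∫⁻ p in Complex.polarCoord.target, T.indicator (fun p => ENNReal.ofReal p.1) p := by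
      rw [← Complex.lintegral_comp_polarCoord_symm]
      exact setLIntegral_congr_fun Complex.polarCoord.open_target.measurableSet hpolar
    _ = ∫⁻ p : ℝ × ℝ, T.indicator (fun p => ENNReal.ofReal p.1) p := by
      rw [setLIntegral_indicator hT, inter_eq_left.2 hTtarget, lintegral_indicator hT]
    _ = ∫⁻ φ, ∫⁻ r, T.indicator (fun p => ENNReal.ofReal p.1) (r, φ) := by
      rw [Measure.volume_eq_prod]
      exact lintegral_prod_symm' _ ((measurable_fst.ennreal_ofReal).indicator hT)
    _ = ∫⁻ φ, s.indicator (fun φ => ENNReal.ofReal (f φ ^ 2 / 2)) φ := by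
      congr 1; ext φ
      by_cases hφ : φ ∈ s
      · rw [indicator_of_mem hφ, ← setLIntegral_Ioc_zero_ofReal (hf0 φ),
          ← lintegral_indicator measurableSet_Ioc]
        congr 1; ext r
        simp [T, indicator, hφ]
      · simp [T, indicator, hφ]
    _ = ∫⁻ φ in s, ENNReal.ofReal (f φ ^ 2 / 2) := lintegral_indicator hs _

lemma exp_mul_I_mul_exp_neg (a : ℝ) (ζ : ℂ) :
    exp (a * I) * (exp (-(a * I)) * ζ) = ζ := by
  rw [← mul_assoc, ← Complex.exp_add, add_neg_cancel, Complex.exp_zero, one_mul]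

lemma mem_angularSector_iff {P : ℂ} {a δ : ℝ} (hδ0 : 0 ≤ δ) (hδπ : δ < π) {z : ℂ} :
    z ∈ angularSector P a (a + δ) ↔ arg (exp (-(a * I)) * (z - P)) ∈ Icc 0 δ := by
  constructor
  · rintro ⟨t, ht, φ, haφ, hφδ, rfl⟩
    have hζ : exp (-(a * I)) * (P + t * exp (φ * I) - P) = t * exp (↑(φ - a) * I) := by
      rw [add_sub_cancel_left, mul_left_comm, ← Complex.exp_add]
      push_cast; ring_nf
    rw [hζ]
    rcases ht.eq_or_lt with rfl | ht
    · simp [hδ0]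
    · rw [arg_real_mul _ ht, exp_mul_I, arg_cos_add_sin_mul_I ⟨by linarith, by linarith⟩]
      exact ⟨by linarith, by linarith⟩
  · set ζ := exp (-(a * I)) * (z - P)
    rintro ⟨h0, hδ⟩
    refine ⟨‖ζ‖, norm_nonneg ζ, a + arg ζ, by linarith, by linarith, ?_⟩
    rw [ofReal_add, add_mul, Complex.exp_add, mul_left_comm, norm_mul_exp_arg_mul_I,
      exp_mul_I_mul_exp_neg, add_sub_cancel]

lemma volume_closedBall_inter_angularSector {O P : ℂ} {R : ℝ} (hP : ‖P - O‖ ≤ R) (a : ℝ)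
    {δ : ℝ} (hδ0 : 0 ≤ δ) (hδπ : δ < π) :
    volume (closedBall O R ∩ angularSector P a (a + δ)) =
      ∫⁻ φ in Icc 0 δ, ENNReal.ofReal (rayLength (P - O) R (a + φ) ^ 2 / 2) := by
  set g : ℂ → ℂ := fun z => exp (-(a * I)) * (z - P)
  have hg : MeasurePreserving g := by
    have : g = rotation (Circle.exp (-a)) ∘ (· - P) := by
      funext z
      simp only [g, Function.comp_apply, rotation_apply, Circle.coe_exp]
      rw [ofReal_neg, neg_mul]
    rw [this]
    exact (rotation _).measurePreserving.comp (measurePreserving_sub_right volume P)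
  have hpre : closedBall O R ∩ angularSector P a (a + δ) =
      g ⁻¹' {ζ | arg ζ ∈ Icc 0 δ ∧ ‖ζ‖ ≤ rayLength (P - O) R (a + arg ζ)} := by
    ext z
    have hz : z - O = (P - O) + ‖g z‖ * exp (↑(a + arg (g z)) * I) := by
      rw [ofReal_add, add_mul, Complex.exp_add, mul_left_comm, norm_mul_exp_arg_mul_I,
        exp_mul_I_mul_exp_neg]
      ring
    rw [mem_inter_iff, mem_closedBall, Complex.dist_eq, hz,
      norm_add_mul_exp_le_iff hP (norm_nonneg _), mem_angularSector_iff hδ0 hδπ, and_comm]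
    rfl
  have hf : Continuous fun φ => rayLength (P - O) R (a + φ) :=
    (continuous_rayLength _ _).comp (continuous_const_add a)
  rw [hpre, hg.measure_preimage]
  · exact volume_setOf_arg_mem_norm_le measurableSet_Icc
      (fun φ hφ => ⟨by linarith [hφ.1, pi_pos], by linarith [hφ.2]⟩) hf.measurable
      (fun φ => rayLength_nonneg hP _)
  · exact ((measurable_arg measurableSet_Icc).inter
      (measurableSet_le measurable_norm (hf.measurable.comp measurable_arg))).nullMeasurableSet

lemma sum_volume_quarter_turns {O P : ℂ} {R : ℝ} (hP : ‖P - O‖ ≤ R) (a : ℝ) {δ : ℝ}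
    (hδ0 : 0 ≤ δ) (hδπ : δ < π) :
    ∑ j ∈ Finset.range 4, volume (closedBall O R ∩
      angularSector P (a + j * (π / 2)) (a + j * (π / 2) + δ)) =
        ENNReal.ofReal (2 * R ^ 2 * δ) := by
  have hsum : ∀ φ, ∑ j ∈ Finset.range 4,
      ENNReal.ofReal (rayLength (P - O) R (a + j * (π / 2) + φ) ^ 2 / 2) =
        ENNReal.ofReal (2 * R ^ 2) := by
    intro φ
    rw [← ENNReal.ofReal_sum_of_nonneg (fun _ _ => by positivity), ← Finset.sum_div]
    simp_rw [add_right_comm a _ φ]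
    rw [sum_rayLength_sq_quarter_turns hP]
    ring_nf
  simp_rw [volume_closedBall_inter_angularSector hP _ hδ0 hδπ]
  rw [← lintegral_finsetSum _ fun j _ => by fun_prop]
  simp_rw [hsum]
  rw [setLIntegral_const, Real.volume_Icc, sub_zero, ← ENNReal.ofReal_mul (by positivity)]

lemma Finset.sum_range_mul_eq_sum_sum {M : Type*} [AddCommMonoid M] (f : ℕ → M) (k m : ℕ) :
    ∑ i ∈ range (k * m), f i = ∑ i ∈ range m, ∑ j ∈ range k, f (i + j * m) := by
  induction k with
  | zero => simp
  | succ k ih =>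
    simp_rw [sum_range_succ, sum_add_distrib, ← ih, Nat.succ_mul, sum_range_add, add_comm]

lemma sum_volume_alternate_slices {O P : ℂ} {R : ℝ} (hP : ‖P - O‖ ≤ R) {n : ℕ} (hn : 0 < n)
    (h4 : 4 ∣ n) (θ : ℝ) :
    ∑ i ∈ Finset.range n, volume (closedBall O R ∩
        angularSector P (θ + (2 * (i : ℝ)) * π / n) (θ + (2 * (i : ℝ) + 1) * π / n)) =
      ENNReal.ofReal (π * R ^ 2 / 2) := by
  obtain ⟨m, rfl⟩ := h4
  have hm : (1 : ℝ) ≤ m := by exact_mod_cast (by omega : 1 ≤ m)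
  have hδ0 : 0 ≤ π / (4 * m) := by positivity
  have hδπ : π / (4 * m) < π := div_lt_self pi_pos (by linarith)
  rw [Finset.sum_range_mul_eq_sum_sum]
  calc _ = ∑ i ∈ Finset.range m, ENNReal.ofReal (2 * R ^ 2 * (π / (4 * m))) := by
        refine Finset.sum_congr rfl fun i _ => ?_
        rw [← sum_volume_quarter_turns hP (θ + 2 * i * π / (4 * m)) hδ0 hδπ]
        refine Finset.sum_congr rfl fun j _ => ?_
        congr 3 <;> push_cast <;> field_simp <;> ring
    _ = ENNReal.ofReal (π * R ^ 2 / 2) := by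
        rw [Finset.sum_const, Finset.card_range, nsmul_eq_mul, ← ENNReal.ofReal_natCast,
          ← ENNReal.ofReal_mul (Nat.cast_nonneg m)]
        congr 1
        field_simp
        ring

theorem pizza_stmt4_general
    (O P : ℂ) (R : ℝ) (hP : P ∈ Metric.closedBall O R)
    (n : ℕ) (hn : 0 < n) (hmul : 4 ∣ n) (θ : ℝ) :
    (∑ i ∈ Finset.range n, volume (Metric.closedBall O R ∩
        angularSector P (θ + (2 * (i : ℝ)) * π / n) (θ + (2 * (i : ℝ) + 1) * π / n))) =
      ENNReal.ofReal (π * R ^ 2 / 2) ∧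
    (∑ i ∈ Finset.range n, volume (Metric.closedBall O R ∩
        angularSector P (θ + (2 * (i : ℝ) + 1) * π / n) (θ + (2 * (i : ℝ) + 2) * π / n))) =
      ENNReal.ofReal (π * R ^ 2 / 2) := by
  have hP' : ‖P - O‖ ≤ R := by rwa [mem_closedBall, Complex.dist_eq] at hP
  refine ⟨sum_volume_alternate_slices hP' hn hmul θ, ?_⟩
  convert sum_volume_alternate_slices hP' hn hmul (θ + π / n) using 5 with i <;> ring

/-- Pizza Theorem, two-person form: `D` the closed disk of radius `R` about
`O`, `P ∈ D`, `n` a positive multiple of `4`.  The `n` lines through `P` at angles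
`θ + jπ/n` cut `D` into `2n` slices, the `j`-th slice (for `1 ≤ j ≤ 2n`) being `D`
intersected with the sector at `P` of angles `[θ + (j−1)π/n, θ + jπ/n]`.  Then the total
area of the odd-numbered slices and the total area of the even-numbered slices each equal
half the area of `D`. -/
theorem pizza_stmt4
    (O P : ℂ) (R : ℝ) (hR : 0 < R) (hP : P ∈ Metric.closedBall O R)
    (n : ℕ) (hn : 0 < n) (hmul : 4 ∣ n) (θ : ℝ) :
    (∑ i ∈ Finset.range n, volume (Metric.closedBall O R ∩
        angularSector P (θ + (2 * (i : ℝ)) * π / n) (θ + (2 * (i : ℝ) + 1) * π / n))) =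
      ENNReal.ofReal (π * R ^ 2 / 2) ∧
    (∑ i ∈ Finset.range n, volume (Metric.closedBall O R ∩
        angularSector P (θ + (2 * (i : ℝ) + 1) * π / n) (θ + (2 * (i : ℝ) + 2) * π / n))) =
      ENNReal.ofReal (π * R ^ 2 / 2) :=
  pizza_stmt4_general O P R hP n hn hmul θ
end
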